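/- Let I be an arc of S¹ = ℝ/ℤ or S¹ itself, and let {f_{p,q}}_{(p,q)∈I²_*} be an intrinsic conic system on I with supports F_{p,q}. For p ∈ I and q ∈ Ī define F*_{p,q} = F_{p,q} if f_{p,q}(p) ≥ 4, and F*_{p,q} = F_{p,q} \ {p} if f_{p,q}(p) = 2. Then for each fixed p ∈ I, the family {F*_{p,q}}_{q∈Ī} is an intrinsic circle system on Ī. -/

import Mathlib

open Filter Topology

noncomputable section

/-- The circle S¹ = ℝ/ℤ. -/
abbrev S1 := AddCircle (1 : ℝ)

/-- The projection ℝ → S¹. -/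
def pr (x : ℝ) : S1 := (x : S1)

/-- The closed arc from `a` to `b` (for real representatives `a ≤ b`). -/
def arcCC (a b : ℝ) : Set S1 := pr '' Set.Icc a b

/-- The half-open arc `[a,b)`. -/
def arcCO (a b : ℝ) : Set S1 := pr '' Set.Ico a b

/-- The half-open arc `(a,b]`. -/
def arcOC (a b : ℝ) : Set S1 := pr '' Set.Ioc a b

/-- The open arc `(a,b)`. -/
def arcOO (a b : ℝ) : Set S1 := pr '' Set.Ioo a b

/-- `I` is an arc of the circle: the image of an interval of positive length
less than 1 (closed, half-open, or open). -/
def IsArc (I : Set S1) : Prop :=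
  ∃ a b : ℝ, a < b ∧ b < a + 1 ∧
    (I = arcCC a b ∨ I = arcCO a b ∨ I = arcOC a b ∨ I = arcOO a b)

/-- `p ≺ q ≺ r` cyclically: the three points admit representatives
`p̃ < q̃ < r̃ < p̃ + 1`. -/
def cyc3 (p q r : S1) : Prop :=
  ∃ a b c : ℝ, pr a = p ∧ pr b = q ∧ pr c = r ∧ a < b ∧ b < c ∧ c < a + 1

/-- `p ≺ q ≺ r ≺ s` cyclically: the four points admit representatives
`p̃ < q̃ < r̃ < s̃ < p̃ + 1`. -/
def cyc4 (p q r s : S1) : Prop :=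
  ∃ a b c d : ℝ, pr a = p ∧ pr b = q ∧ pr c = r ∧ pr d = s ∧
    a < b ∧ b < c ∧ c < d ∧ d < a + 1

/-- `x` is an isolated point of the set `F`. -/
def IsolatedIn (x : S1) (F : Set S1) : Prop :=
  ∃ U : Set S1, IsOpen U ∧ x ∈ U ∧ U ∩ F = {x}

/-- The set `F` has exactly two connected components. -/
def TwoComponents (F : Set S1) : Prop :=
  ∃ x ∈ F, ∃ y ∈ F, connectedComponentIn F x ≠ connectedComponentIn F y ∧
    ∀ z ∈ F, connectedComponentIn F z = connectedComponentIn F x ∨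
      connectedComponentIn F z = connectedComponentIn F y

/-- An intrinsic circle system on an index set `I ⊆ S¹`: a family of closed
sets `F p` (for `p ∈ I`) satisfying axioms (I0)–(I3). -/
structure IsIntrinsicCircleSystem (I : Set S1) (F : S1 → Set S1) : Prop where
  /-- The sets of the family are closed. -/
  isClosed : ∀ p ∈ I, IsClosed (F p)
  /-- (I0) `p ∈ F p`. -/
  mem_self : ∀ p ∈ I, p ∈ F p
  /-- (I1) if `F p` and `F q` meet then they coincide. -/
  eq_of_inter : ∀ p ∈ I, ∀ q ∈ I, (F p ∩ F q).Nonempty → F p = F q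
  /-- (I2) if `p' ∈ F p`, `q' ∈ F q` and `p ≺ q ≺ p' ≺ q'` cyclically then
  `F p = F q`. -/
  eq_of_cyc : ∀ p ∈ I, ∀ q ∈ I, ∀ p' ∈ F p, ∀ q' ∈ F q,
    cyc4 p q p' q' → F p = F q
  /-- (I3) closedness under limits of sequences from the interior of `I`. -/
  mem_of_tendsto : ∀ (pn qn : ℕ → S1) (p q : S1),
    (∀ n, pn n ∈ interior I) → (∀ n, qn n ∈ interior I) →
    p ∈ I → q ∈ I →
    Tendsto pn atTop (nhds p) → Tendsto qn atTop (nhds q) →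
    (∀ n, qn n ∈ F (pn n)) → q ∈ F p

/-- `p ⪯ q ⪯ p' ⪯ q' ≺ p'' ≺ q'' (≺ p)` cyclically, via representatives
`p̃ ≤ q̃ ≤ p̃' ≤ q̃' < p̃'' < q̃'' < p̃ + 1`. -/
def chain6 (p q p' q' p'' q'' : S1) : Prop :=
  ∃ a b c d e g : ℝ, pr a = p ∧ pr b = q ∧ pr c = p' ∧ pr d = q' ∧
    pr e = p'' ∧ pr g = q'' ∧
    a ≤ b ∧ b ≤ c ∧ c ≤ d ∧ d < e ∧ e < g ∧ g < a + 1

/-- The reverse cyclic order `p ⪰ q ⪰ p' ⪰ q' ≻ p'' ≻ q'' (≻ p)`, via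
representatives `p̃ ≥ q̃ ≥ p̃' ≥ q̃' > p̃'' > q̃'' > p̃ - 1`. -/
def chain6rev (p q p' q' p'' q'' : S1) : Prop :=
  ∃ a b c d e g : ℝ, pr a = p ∧ pr b = q ∧ pr c = p' ∧ pr d = q' ∧
    pr e = p'' ∧ pr g = q'' ∧
    b ≤ a ∧ c ≤ b ∧ d ≤ c ∧ e < d ∧ g < e ∧ a - 1 < g

/-- The index set `I²_* = (Ī × Ī) \ {(p,p) : p ∈ Ī \ I}` of an intrinsic conic
system on `I`. -/
def ConicDom (I : Set S1) : Set (S1 × S1) :=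
  {pq | pq.1 ∈ closure I ∧ pq.2 ∈ closure I ∧ (pq.1 = pq.2 → pq.1 ∈ I)}

/-- The support `F_{p,q} = {r : f_{p,q}(r) > 0}`. -/
def suppF (f : S1 → S1 → S1 → ℕ∞) (p q : S1) : Set S1 := {r | f p q r ≠ 0}

/-- An intrinsic conic system on `I`: a family of functions
`f p q : S¹ → {0,2,4,…} ∪ {∞}`, indexed by `(p,q) ∈ I²_*`, satisfying axioms
(A1)–(A8). -/
structure IsIntrinsicConicSystem (I : Set S1) (f : S1 → S1 → S1 → ℕ∞) : Prop where
  /-- The values of the family are even numbers or `∞`. -/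
  even_values : ∀ p q r : S1, (p, q) ∈ ConicDom I →
    f p q r = ⊤ ∨ ∃ k : ℕ, f p q r = ((2 * k : ℕ) : ℕ∞)
  /-- (A1) the supports are closed. -/
  supp_closed : ∀ p q : S1, (p, q) ∈ ConicDom I → IsClosed (suppF f p q)
  /-- (A1) `p, q ∈ F_{p,q}`. -/
  self_mem : ∀ p q : S1, (p, q) ∈ ConicDom I → f p q p ≠ 0 ∧ f p q q ≠ 0
  /-- (A2) symmetry. -/
  symm : ∀ p q : S1, (p, q) ∈ ConicDom I → f p q = f q p
  /-- (A3) if `F_{p,q}` and `F_{p,r}` share a point `s ≠ p`, then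
  `f_{p,q} = f_{p,r}`. -/
  eq_of_common : ∀ p q r s : S1, (p, q) ∈ ConicDom I → (p, r) ∈ ConicDom I →
    s ≠ p → f p q s ≠ 0 → f p r s ≠ 0 → f p q = f p r
  /-- (A4) interlacing in the (possibly reversed) cyclic order forces
  equality. -/
  eq_of_chain : ∀ p q p' q' p'' q'' : S1,
    (p, p') ∈ ConicDom I → (q, q') ∈ ConicDom I →
    f p p' p'' ≠ 0 → f q q' q'' ≠ 0 →
    (chain6 p q p' q' p'' q'' ∨ chain6rev p q p' q' p'' q'') →
    (p = p' → 4 ≤ f p p' p) → (q = q' → 4 ≤ f q q' q) →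
    f p p' = f q q'
  /-- (A5) if `f_{p,q}(r) ≥ 4` and `r ∈ I` then `f_{r,r} = f_{p,q}`. -/
  eq_diag : ∀ p q r : S1, (p, q) ∈ ConicDom I → 4 ≤ f p q r → r ∈ I →
    f r r = f p q
  /-- (A6) lower semicontinuity of multiplicities under limits, with strict
  increase for pairs of distinct points. -/
  limit_mult : ∀ (pn qn rn₁ rn₂ : ℕ → S1) (p q r : S1) (k₁ k₂ : ℕ),
    (∀ n, (pn n, qn n) ∈ ConicDom I) → (p, q) ∈ ConicDom I →
    Tendsto pn atTop (nhds p) → Tendsto qn atTop (nhds q) →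
    (∀ n, rn₁ n ∈ closure I ∧ rn₁ n ∈ suppF f (pn n) (qn n)) →
    (∀ n, rn₂ n ∈ closure I ∧ rn₂ n ∈ suppF f (pn n) (qn n)) →
    r ∈ closure I →
    Tendsto rn₁ atTop (nhds r) → Tendsto rn₂ atTop (nhds r) →
    (∀ n, (k₁ : ℕ∞) ≤ f (pn n) (qn n) (rn₁ n)) →
    (∀ n, (k₂ : ℕ∞) ≤ f (pn n) (qn n) (rn₂ n)) →
    ((max k₁ k₂ : ℕ) : ℕ∞) ≤ f p q r ∧
      ((∀ n, rn₁ n ≠ rn₂ n) → ((max k₁ k₂ : ℕ) : ℕ∞) < f p q r)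
  /-- (A7) the total multiplicity of `f_{p,q}` is at least six. -/
  total_six : ∀ p q : S1, (p, q) ∈ ConicDom I →
    ∃ s : Finset S1, 6 ≤ ∑ r ∈ s, f p q r
  /-- (A8) if `f_{p,q}(p) = 2` then `p` is isolated in `F_{p,q}`. -/
  isolated_of_two : ∀ p q : S1, (p, q) ∈ ConicDom I → f p q p = 2 →
    IsolatedIn p (suppF f p q)

/-- `F*_{p,q}`: the support of `f_{p,q}` if `f_{p,q}(p) ≥ 4`, and the support
with `p` removed if `f_{p,q}(p) = 2`. -/
def Fstar (f : S1 → S1 → S1 → ℕ∞) (p q : S1) : Set S1 :=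
  {r | r ∈ suppF f p q ∧ (r = p → 4 ≤ f p q p)}


/-!
Each circle-system axiom for `q ↦ F*_{p,q}` is a conic-system axiom in disguise. (I1) is (A3)
away from `p` and (A5) at `p`. (I2) is (A4) applied to two conics through `p`, once `p` has been
located among the four interlaced points; when `p` separates `x` from `y`, the arc `Ī` contains
`p` and `u`, hence one of `x`, `y`, and (A3) lets that point replace `u` or `v`. (I3) and the
inequality `f_{p,p}(p) ≥ 4` (needed for (I0)) come from the semicontinuity axiom (A6): for the
latter let `q → p` inside `Ī`, which has no isolated points, so that the two distinct points `p`
and `q` of `F_{p,q}` merge at `p`.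
-/

open Set

lemma continuous_pr : Continuous pr := AddCircle.continuous_mk' 1

lemma pr_add_one (s : ℝ) : pr (s + 1) = pr s := AddCircle.coe_add_period 1 s

lemma pr_sub_one (s : ℝ) : pr (s - 1) = pr s := by
  rw [← pr_add_one (s - 1), sub_add_cancel]

lemma injOn_pr_Ico (a : ℝ) : InjOn pr (Ico a (a + 1)) := fun _ hs _ ht h =>
  (AddCircle.coe_eq_coe_iff_of_mem_Ico hs ht).1 h

lemma pr_ne_pr {s t : ℝ} (hst : s < t) (hts : t < s + 1) : pr s ≠ pr t := fun h =>
  hst.ne (injOn_pr_Ico s ⟨le_rfl, by linarith⟩ ⟨hst.le, hts⟩ h)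

lemma exists_mem_Ico_pr_eq (a : ℝ) (z : S1) : ∃ s ∈ Ico a (a + 1), pr s = z :=
  ⟨AddCircle.equivIco 1 a z, (AddCircle.equivIco 1 a z).2, AddCircle.coe_equivIco⟩

lemma pr_eq_pr_iff {s t : ℝ} : pr s = pr t ↔ ∃ k : ℤ, t = s + k := by
  rw [pr, pr, QuotientAddGroup.eq, AddSubgroup.mem_zmultiples_iff]
  refine exists_congr fun k => ?_
  rw [zsmul_one]
  constructor <;> intro h <;> linarith

lemma closure_pr_image {S : Set ℝ} (hS : Bornology.IsBounded S) :
    closure (pr '' S) = pr '' closure S :=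
  (image_closure_of_isCompact hS.isCompact_closure continuous_pr.continuousOn).symm

lemma IsArc.exists_closure_eq {I : Set S1} (hI : IsArc I) :
    ∃ a b : ℝ, a < b ∧ b < a + 1 ∧ closure I = arcCC a b := by
  obtain ⟨a, b, hab, hb, hI⟩ := hI
  refine ⟨a, b, hab, hb, ?_⟩
  rcases hI with rfl | rfl | rfl | rfl
  · rw [arcCC, closure_pr_image (Metric.isBounded_Icc a b), closure_Icc]
  · rw [arcCO, closure_pr_image (Metric.isBounded_Ico a b), closure_Ico hab.ne, arcCC]
  · rw [arcOC, closure_pr_image (Metric.isBounded_Ioc a b), closure_Ioc hab.ne, arcCC]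
  · rw [arcOO, closure_pr_image (Metric.isBounded_Ioo a b), closure_Ioo hab.ne, arcCC]

lemma pr_mem_arcCC_or_pr_mem_arcCC {a b c t d e : ℝ} (hb : b < a + 1)
    (hct : c < t) (htd : t < d) (hde : d < e) (hec : e < c + 1)
    (ht : pr t ∈ arcCC a b) (he : pr e ∈ arcCC a b) :
    pr c ∈ arcCC a b ∨ pr d ∈ arcCC a b := by
  -- The lifts `t + k` and `e + j` lie in `[a, b]`, of length `< 1`, so `k - j ∈ {0, 1}`; then the
  -- lift `d + k` (if `k = j`) or `c + k` (if `k = j + 1`) lies between them.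
  obtain ⟨t', ht', htt'⟩ := ht
  obtain ⟨e', he', hee'⟩ := he
  obtain ⟨k, rfl⟩ := pr_eq_pr_iff.1 htt'.symm
  obtain ⟨j, rfl⟩ := pr_eq_pr_iff.1 hee'.symm
  have hkj : k = j ∨ k = j + 1 := by
    have h1 : (-1 : ℝ) < k - j := by linarith [ht'.1, he'.2]
    have h2 : (k - j : ℝ) < 2 := by linarith [ht'.2, he'.1]
    have : -1 < k - j ∧ k - j < 2 := ⟨by exact_mod_cast h1, by exact_mod_cast h2⟩
    omega
  rcases hkj with rfl | hkj
  · right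
    exact ⟨d + k, ⟨by linarith [ht'.1], by linarith [he'.2]⟩,
      pr_eq_pr_iff.2 ⟨-k, by push_cast; ring⟩⟩
  · left
    have hkj : (k : ℝ) = j + 1 := by exact_mod_cast hkj
    exact ⟨c + k, ⟨by linarith [he'.1], by linarith [ht'.2]⟩,
      pr_eq_pr_iff.2 ⟨-k, by push_cast; ring⟩⟩

lemma mem_closure_arcCC_diff_singleton {a b : ℝ} (hab : a < b) (hb : b < a + 1) {z : S1}
    (hz : z ∈ arcCC a b) : z ∈ closure (arcCC a b \ {z}) := by
  obtain ⟨s, hs, rfl⟩ := hz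
  have hs' : s ∈ closure (Icc a b \ {s}) := by
    rcases hs.2.lt_or_eq with hsb | rfl
    · have hsub : Ioo s b ⊆ Icc a b \ {s} := fun r hr =>
        ⟨⟨by linarith [hs.1, hr.1], hr.2.le⟩, hr.1.ne'⟩
      exact closure_mono hsub (by rw [closure_Ioo hsb.ne]; exact left_mem_Icc.2 hsb.le)
    · have hsub : Ioo a s ⊆ Icc a s \ {s} := fun r hr => ⟨Ioo_subset_Icc_self hr, hr.2.ne⟩
      exact closure_mono hsub (by rw [closure_Ioo hab.ne]; exact right_mem_Icc.2 hab.le)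
  refine closure_mono ?_ (mem_closure_image continuous_pr.continuousAt hs')
  rintro _ ⟨r, ⟨hr, hrs⟩, rfl⟩
  refine ⟨⟨r, hr, rfl⟩, fun h => hrs (injOn_pr_Ico a ?_ ?_ h)⟩
  · exact ⟨hr.1, by linarith [hr.2]⟩
  · exact ⟨hs.1, by linarith [hs.2]⟩

section ClosureOfArc

variable {I : Set S1}

lemma exists_arcCC_subset_closure (hI : IsArc I ∨ I = univ) {z : S1} (hz : z ∈ closure I) :
    ∃ a b : ℝ, a < b ∧ b < a + 1 ∧ z ∈ arcCC a b ∧ arcCC a b ⊆ closure I := by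
  rcases hI with hI | rfl
  · obtain ⟨a, b, hab, hb, hcl⟩ := hI.exists_closure_eq
    exact ⟨a, b, hab, hb, hcl ▸ hz, hcl.ge⟩
  · obtain ⟨s, -, rfl⟩ := exists_mem_Ico_pr_eq 0 z
    exact ⟨s, s + 1 / 2, by linarith, by linarith, ⟨s, left_mem_Icc.2 (by linarith), rfl⟩,
      by simp⟩

lemma exists_seq_tendsto_ne (hI : IsArc I ∨ I = univ) {z : S1} (hz : z ∈ closure I) :
    ∃ w : ℕ → S1, (∀ n, w n ∈ closure I ∧ w n ≠ z) ∧ Tendsto w atTop (𝓝 z) := by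
  obtain ⟨a, b, hab, hb, hza, hsub⟩ := exists_arcCC_subset_closure hI hz
  exact mem_closure_iff_seq_limit.1 <|
    closure_mono (sdiff_subset_sdiff_left hsub) (mem_closure_arcCC_diff_singleton hab hb hza)

lemma pr_mem_closure_or_pr_mem_closure (hI : IsArc I ∨ I = univ) {c t d e : ℝ}
    (hct : c < t) (htd : t < d) (hde : d < e) (hec : e < c + 1)
    (ht : pr t ∈ closure I) (he : pr e ∈ closure I) :
    pr c ∈ closure I ∨ pr d ∈ closure I := by
  rcases hI with hI | rfl
  · obtain ⟨a, b, -, hb, hcl⟩ := hI.exists_closure_eq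
    rw [hcl] at ht he ⊢
    exact pr_mem_arcCC_or_pr_mem_arcCC hb hct htd hde hec ht he
  · simp

end ClosureOfArc

namespace ENat

lemma two_le_of_even_of_ne_zero {x : ℕ∞} (hx : Even x) (h0 : x ≠ 0) : 2 ≤ x := by
  obtain ⟨r, rfl⟩ := hx
  induction r using ENat.recTopCoe with
  | top => simp
  | coe n => norm_cast at h0 ⊢; omega

lemma four_le_of_even_of_two_lt {x : ℕ∞} (hx : Even x) (h : 2 < x) : 4 ≤ x := by
  obtain ⟨r, rfl⟩ := hx
  induction r using ENat.recTopCoe with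
  | top => simp
  | coe n => norm_cast at h ⊢; omega

lemma eq_two_of_even_of_lt_four {x : ℕ∞} (hx : Even x) (h0 : x ≠ 0) (h : x < 4) : x = 2 := by
  obtain ⟨r, rfl⟩ := hx
  induction r using ENat.recTopCoe with
  | top => simp at h
  | coe n => norm_cast at h0 h ⊢; omega

end ENat

lemma mk_mem_conicDom {I : Set S1} {p q : S1} (hp : p ∈ I) (hq : q ∈ closure I) :
    (p, q) ∈ ConicDom I :=
  ⟨subset_closure hp, hq, fun _ => hp⟩

lemma mk_mem_conicDom_swap {I : Set S1} {p q : S1} (hp : p ∈ I) (hq : q ∈ closure I) :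
    (q, p) ∈ ConicDom I :=
  ⟨hq, subset_closure hp, fun h => h ▸ hp⟩

lemma Fstar_congr {f : S1 → S1 → S1 → ℕ∞} {p q q' : S1} (h : f p q = f p q') :
    Fstar f p q = Fstar f p q' := by
  simp only [Fstar, suppF, h]

lemma IsolatedIn.isClosed_diff_singleton {x : S1} {F : Set S1} (hx : IsolatedIn x F)
    (hF : IsClosed F) : IsClosed (F \ {x}) := by
  obtain ⟨U, hU, hxU, hUF⟩ := hx
  have : F \ {x} = F ∩ Uᶜ := by
    ext r
    refine and_congr_right fun hr => ⟨fun hrx hrU => hrx ?_, fun hrU hrx => hrU (hrx ▸ hxU)⟩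
    simpa [← hUF] using And.intro hrU hr
  rw [this]
  exact hF.inter hU.isClosed_compl

namespace IsIntrinsicConicSystem

variable {I : Set S1} {f : S1 → S1 → S1 → ℕ∞} {p : S1}

lemma even_apply (hf : IsIntrinsicConicSystem I f) {q : S1} (h : (p, q) ∈ ConicDom I)
    (r : S1) : Even (f p q r) := by
  rcases hf.even_values p q r h with h | ⟨k, h⟩ <;> rw [h]
  · exact ⟨⊤, rfl⟩
  · exact ⟨k, by push_cast; ring⟩

lemma le_apply_of_tendsto (hf : IsIntrinsicConicSystem I f) (hp : p ∈ I)
    {qn rn : ℕ → S1} {q r : S1} {k : ℕ} (hk : k ≠ 0)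
    (hqn : ∀ n, qn n ∈ closure I) (hrn : ∀ n, rn n ∈ closure I)
    (hq : Tendsto qn atTop (𝓝 q)) (hr : Tendsto rn atTop (𝓝 r))
    (hle : ∀ n, (k : ℕ∞) ≤ f p (qn n) (rn n)) : (k : ℕ∞) ≤ f p q r := by
  have hsupp : ∀ n, rn n ∈ closure I ∧ rn n ∈ suppF f p (qn n) := fun n =>
    ⟨hrn n, ((Nat.cast_pos.2 (Nat.pos_of_ne_zero hk)).trans_le (hle n)).ne'⟩
  simpa using (hf.limit_mult (fun _ => p) qn rn rn p q r k k
    (fun n => mk_mem_conicDom hp (hqn n))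
    (mk_mem_conicDom hp (isClosed_closure.mem_of_tendsto hq (.of_forall hqn)))
    tendsto_const_nhds hq hsupp hsupp (isClosed_closure.mem_of_tendsto hr (.of_forall hrn))
    hr hr hle hle).1

lemma four_le_apply_of_tendsto (hf : IsIntrinsicConicSystem I f) (hp : p ∈ I)
    {qn rn rn' : ℕ → S1} {q r : S1}
    (hqn : ∀ n, qn n ∈ closure I) (hrn : ∀ n, rn n ∈ closure I)
    (hrn' : ∀ n, rn' n ∈ closure I) (hq : Tendsto qn atTop (𝓝 q))
    (hr : Tendsto rn atTop (𝓝 r)) (hr' : Tendsto rn' atTop (𝓝 r))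
    (hs : ∀ n, f p (qn n) (rn n) ≠ 0) (hs' : ∀ n, f p (qn n) (rn' n) ≠ 0)
    (hne : ∀ n, rn n ≠ rn' n) : 4 ≤ f p q r := by
  have hdom := mk_mem_conicDom hp (isClosed_closure.mem_of_tendsto hq (.of_forall hqn))
  have two_le : ∀ {n s}, f p (qn n) s ≠ 0 → ((2 : ℕ) : ℕ∞) ≤ f p (qn n) s := fun h =>
    ENat.two_le_of_even_of_ne_zero (hf.even_apply (mk_mem_conicDom hp (hqn _)) _) h
  have := (hf.limit_mult (fun _ => p) qn rn rn' p q r 2 2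
    (fun n => mk_mem_conicDom hp (hqn n)) hdom tendsto_const_nhds hq
    (fun n => ⟨hrn n, hs n⟩) (fun n => ⟨hrn' n, hs' n⟩)
    (isClosed_closure.mem_of_tendsto hr (.of_forall hrn))
    hr hr' (fun n => two_le (hs n)) (fun n => two_le (hs' n))).2 hne
  exact ENat.four_le_of_even_of_two_lt (hf.even_apply hdom r) (by simpa using this)

lemma four_le_apply_self (hf : IsIntrinsicConicSystem I f) (hI : IsArc I ∨ I = univ)
    (hp : p ∈ I) : 4 ≤ f p p p := by
  obtain ⟨w, hw, hlim⟩ := exists_seq_tendsto_ne hI (subset_closure hp)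
  have hdom : ∀ n, (p, w n) ∈ ConicDom I := fun n => mk_mem_conicDom hp (hw n).1
  exact hf.four_le_apply_of_tendsto hp (fun n => (hw n).1) (fun n => (hw n).1)
    (fun _ => subset_closure hp) hlim hlim tendsto_const_nhds
    (fun n => (hf.self_mem p _ (hdom n)).2) (fun n => (hf.self_mem p _ (hdom n)).1)
    (fun n => (hw n).2)

lemma isClosed_Fstar (hf : IsIntrinsicConicSystem I f) (hp : p ∈ I) {q : S1}
    (hq : q ∈ closure I) : IsClosed (Fstar f p q) := by
  have hdom := mk_mem_conicDom hp hq
  by_cases h4 : 4 ≤ f p q p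
  · have : Fstar f p q = suppF f p q := by ext r; simp [Fstar, h4]
    exact this ▸ hf.supp_closed p q hdom
  · have h2 : f p q p = 2 := ENat.eq_two_of_even_of_lt_four (hf.even_apply hdom p)
      (hf.self_mem p q hdom).1 (not_le.1 h4)
    have : Fstar f p q = suppF f p q \ {p} := by ext r; simp [Fstar, h4]
    rw [this]
    exact (hf.isolated_of_two p q hdom h2).isClosed_diff_singleton (hf.supp_closed p q hdom)

lemma mem_Fstar_self (hf : IsIntrinsicConicSystem I f) (hI : IsArc I ∨ I = univ)
    (hp : p ∈ I) {q : S1} (hq : q ∈ closure I) : q ∈ Fstar f p q :=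
  ⟨(hf.self_mem p q (mk_mem_conicDom hp hq)).2, by
    rintro rfl
    exact hf.four_le_apply_self hI hp⟩

lemma Fstar_eq_of_inter_nonempty (hf : IsIntrinsicConicSystem I f) (hp : p ∈ I) {q q' : S1}
    (hq : q ∈ closure I) (hq' : q' ∈ closure I) (h : (Fstar f p q ∩ Fstar f p q').Nonempty) :
    Fstar f p q = Fstar f p q' := by
  obtain ⟨s, hs, hs'⟩ := h
  have hdom := mk_mem_conicDom hp hq
  have hdom' := mk_mem_conicDom hp hq'
  apply Fstar_congr
  by_cases hsp : s = p
  · exact (hf.eq_diag p q p hdom (hs.2 hsp) hp).symm.trans (hf.eq_diag p q' p hdom' (hs'.2 hsp) hp)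
  · exact hf.eq_of_common p q q' s hdom hdom' hsp hs.1 hs'.1

lemma mem_Fstar_of_tendsto (hf : IsIntrinsicConicSystem I f) (hp : p ∈ I)
    {qn rn : ℕ → S1} {q r : S1} (hqn : ∀ n, qn n ∈ closure I)
    (hrn : ∀ n, rn n ∈ closure I) (hq : Tendsto qn atTop (𝓝 q)) (hr : Tendsto rn atTop (𝓝 r))
    (hmem : ∀ n, rn n ∈ Fstar f p (qn n)) : r ∈ Fstar f p q := by
  refine ⟨?_, fun hrp => ?_⟩
  · have := hf.le_apply_of_tendsto hp one_ne_zero hqn hrn hq hr fun n =>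
      by exact_mod_cast Order.one_le_iff_ne_zero.2 (hmem n).1
    exact Order.one_le_iff_ne_zero.1 (by exact_mod_cast this)
  rw [hrp] at hr
  -- Either multiplicity `≥ 4` at `p` persists along a subsequence, or two distinct points of the
  -- supports merge at `p`.
  rcases frequently_or_distrib.1 (Frequently.of_forall (f := atTop) fun n => em (rn n = p))
    with h | h
  all_goals obtain ⟨φ, hφ, hφp⟩ := extraction_of_frequently_atTop h
  · exact_mod_cast hf.le_apply_of_tendsto hp (k := 4) (by norm_num) (fun n => hqn (φ n))
      (fun n => hrn (φ n)) (hq.comp hφ.tendsto_atTop) (hr.comp hφ.tendsto_atTop)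
      fun n => by rw [hφp n]; exact_mod_cast (hmem (φ n)).2 (hφp n)
  · exact hf.four_le_apply_of_tendsto hp (fun n => hqn (φ n)) (fun n => hrn (φ n))
      (fun _ => subset_closure hp) (hq.comp hφ.tendsto_atTop) (hr.comp hφ.tendsto_atTop)
      tendsto_const_nhds (fun n => (hmem (φ n)).1)
      (fun n => (hf.self_mem p _ (mk_mem_conicDom hp (hqn (φ n)))).1) hφp

end IsIntrinsicConicSystem

namespace IsIntrinsicConicSystem

variable {I : Set S1} {f : S1 → S1 → S1 → ℕ∞}

lemma apply_eq_of_between_support_points (hf : IsIntrinsicConicSystem I f)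
    (hI : IsArc I ∨ I = univ) {a b c t d : ℝ} (hp : pr t ∈ I)
    (hpp : 4 ≤ f (pr t) (pr t) (pr t))
    (hab : a < b) (hbc : b < c) (hct : c < t) (htd : t < d) (hda : d < a + 1)
    (hu : pr a ∈ closure I) (hv : pr b ∈ closure I)
    (hx : f (pr t) (pr a) (pr c) ≠ 0) (hy : f (pr t) (pr b) (pr d) ≠ 0) :
    f (pr t) (pr a) = f (pr t) (pr b) := by
  have hu' : pr (a + 1) ∈ closure I := by rwa [pr_add_one]
  rcases pr_mem_closure_or_pr_mem_closure hI hct htd hda (by linarith) (subset_closure hp) hu'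
    with hx' | hy'
  · have hxu : f (pr t) (pr c) = f (pr t) (pr a) :=
      hf.eq_of_common _ _ _ _ (mk_mem_conicDom hp hx') (mk_mem_conicDom hp hu)
        (pr_ne_pr hct (by linarith)) (hf.self_mem _ _ (mk_mem_conicDom hp hx')).2 hx
    rw [← hxu]
    exact hf.eq_of_chain _ _ _ _ _ _ (mk_mem_conicDom hp hx') (mk_mem_conicDom hp hv)
      (by rw [hxu]; exact (hf.self_mem _ _ (mk_mem_conicDom hp hu)).2) hy
      (Or.inr ⟨t, t, c, b, a, d - 1, rfl, rfl, rfl, rfl, rfl, pr_sub_one d,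
        le_rfl, hct.le, hbc.le, hab, by linarith, by linarith⟩)
      (fun h => by rwa [← h]) (fun h => by rwa [← h])
  · have hyv : f (pr t) (pr d) = f (pr t) (pr b) :=
      hf.eq_of_common _ _ _ _ (mk_mem_conicDom hp hy') (mk_mem_conicDom hp hv)
        (pr_ne_pr htd (by linarith)).symm (hf.self_mem _ _ (mk_mem_conicDom hp hy')).2 hy
    rw [← hyv]
    exact (hf.eq_of_chain _ _ _ _ _ _ (mk_mem_conicDom hp hy') (mk_mem_conicDom hp hu)
      (by rw [hyv]; exact (hf.self_mem _ _ (mk_mem_conicDom hp hv)).2) hx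
      (Or.inl ⟨t, t, d, a + 1, b + 1, c + 1, rfl, rfl, rfl, pr_add_one a, pr_add_one b,
        pr_add_one c, le_rfl, htd.le, hda.le, by linarith, by linarith, by linarith⟩)
      (fun h => by rwa [← h]) (fun h => by rwa [← h])).symm

lemma apply_eq_of_cyc4 (hf : IsIntrinsicConicSystem I f) (hI : IsArc I ∨ I = univ)
    {p u v x y : S1} (hp : p ∈ I) (hu : u ∈ closure I) (hv : v ∈ closure I)
    (hx : x ∈ Fstar f p u) (hy : y ∈ Fstar f p v) (h : cyc4 u v x y) : f p u = f p v := by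
  obtain ⟨a, b, c, d, rfl, rfl, rfl, rfl, hab, hbc, hcd, hda⟩ := h
  obtain ⟨t, ⟨hat, hta⟩, rfl⟩ := exists_mem_Ico_pr_eq a p
  have hpp := hf.four_le_apply_self hI hp
  have hpp' := mk_mem_conicDom hp (subset_closure hp)
  have comm : ∀ {w}, w ∈ closure I → f w (pr t) = f (pr t) w := fun hw =>
    (hf.symm _ _ (mk_mem_conicDom hp hw)).symm
  rcases le_or_gt t b with htb | hbt
  · rw [← comm hu]
    exact hf.eq_of_chain _ _ _ _ _ _ (mk_mem_conicDom_swap hp hu) (mk_mem_conicDom hp hv)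
      (by rw [comm hu]; exact hx.1) hy.1
      (Or.inl ⟨a, t, t, b, c, d, rfl, rfl, rfl, rfl, rfl, rfl, hat, le_rfl, htb, hbc, hcd, hda⟩)
      (fun h => by rwa [h]) (fun h => by rwa [← h])
  rcases lt_trichotomy t c with htc | rfl | hct
  · rw [← comm hu, ← comm hv]
    exact hf.eq_of_chain _ _ _ _ _ _ (mk_mem_conicDom_swap hp hu) (mk_mem_conicDom_swap hp hv)
      (by rw [comm hu]; exact hx.1) (by rw [comm hv]; exact hy.1)
      (Or.inl ⟨a, b, t, t, c, d, rfl, rfl, rfl, rfl, rfl, rfl,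
        hab.le, hbt.le, le_rfl, htc, hcd, hda⟩)
      (fun h => by rwa [h]) (fun h => by rwa [h])
  · have hpu := hf.eq_diag _ _ _ (mk_mem_conicDom hp hu) (hx.2 rfl) hp
    rw [← hpu, ← comm hv]
    exact (hf.eq_of_chain _ _ _ _ _ _ (mk_mem_conicDom_swap hp hv) hpp'
      (by rw [comm hv]; exact hy.1) (by rw [hpu]; exact (hf.self_mem _ _ (mk_mem_conicDom hp hu)).2)
      (Or.inl ⟨b, t, t, t, d, a + 1, rfl, rfl, rfl, rfl, rfl, pr_add_one a,
        hbc.le, le_rfl, le_rfl, hcd, hda, by linarith⟩)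
      (fun h => by rwa [h]) (fun _ => hpp)).symm
  rcases lt_trichotomy t d with htd | rfl | hdt
  · exact hf.apply_eq_of_between_support_points hI hp hpp hab hbc hct htd hda hu hv hx.1 hy.1
  · have hpv := hf.eq_diag _ _ _ (mk_mem_conicDom hp hv) (hy.2 rfl) hp
    rw [← hpv]
    exact (hf.eq_of_chain _ _ _ _ _ _ hpp' (mk_mem_conicDom hp hu)
      (by rw [hpv]; exact (hf.self_mem _ _ (mk_mem_conicDom hp hv)).2) hx.1
      (Or.inl ⟨t, t, t, a + 1, b + 1, c + 1, rfl, rfl, rfl, pr_add_one a, pr_add_one b,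
        pr_add_one c, le_rfl, le_rfl, hda.le, by linarith, by linarith, by linarith⟩)
      (fun _ => hpp) (fun h => by rwa [← h])).symm
  · exact hf.eq_of_chain _ _ _ _ _ _ (mk_mem_conicDom hp hu) (mk_mem_conicDom hp hv) hx.1 hy.1
      (Or.inl ⟨t, t, a + 1, b + 1, c + 1, d + 1, rfl, rfl, pr_add_one a, pr_add_one b,
        pr_add_one c, pr_add_one d, le_rfl, hta.le, by linarith, by linarith, by linarith,
        by linarith⟩)
      (fun h => by rwa [← h]) (fun h => by rwa [← h])

end IsIntrinsicConicSystem

/-- For each `p ∈ I`, the family `q ↦ F*_{p,q}` is an intrinsic circle system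
on the closure of `I`. -/
theorem fstar_isIntrinsicCircleSystem
    (I : Set S1) (hI : IsArc I ∨ I = Set.univ)
    (f : S1 → S1 → S1 → ℕ∞)
    (hf : IsIntrinsicConicSystem I f)
    (p : S1) (hp : p ∈ I) :
    IsIntrinsicCircleSystem (closure I) (fun q => Fstar f p q) :=
  { isClosed := fun _ hq => hf.isClosed_Fstar hp hq
    mem_self := fun _ hq => hf.mem_Fstar_self hI hp hq
    eq_of_inter := fun _ hq _ hq' => hf.Fstar_eq_of_inter_nonempty hp hq hq'
    eq_of_cyc := fun _ hu _ hv _ hx _ hy h =>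
      Fstar_congr (hf.apply_eq_of_cyc4 hI hp hu hv hx hy h)
    mem_of_tendsto := fun _ _ _ _ hpn hqn _ _ hlim hlim' hmem =>
      hf.mem_Fstar_of_tendsto hp (fun n => interior_subset (hpn n))
        (fun n => interior_subset (hqn n)) hlim hlim' hmem }
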